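/- Let τ and σ be faithful diffuse probability Radon measures on [0,1], let n ≥ 1, let ε > 0, and let D ⊆ ℕ be an infinite set of positive integers closed under taking divisors and under lcm with n ∈ D. Then there exist k ≥ 1 with nk ∈ D and continuous maps ξ₁, …, ξ_k : [0,1] → [0,1], each having image of diameter less than ε, such that (1/k)·Σᵢ (ξᵢ)_*σ = τ; consequently f ↦ diag(f∘ξ₁, …, f∘ξ_k) is an injective unital *-homomorphism A_n → A_{nk} carrying the trace induced by σ back to the trace induced by τ. -/

import Mathlib

/-!
For a faithful diffuse probability measure `μ` on `[0,1]` the distribution function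
`F_μ t = μ [0,t]` is an increasing self-homeomorphism of `[0,1]` carrying `μ` to Lebesgue
measure.
Lebesgue measure is the average of its pushforwards under the `k` affine maps
`x ↦ (j + x) / k` onto the pieces of `[0,1]`, so the maps `ξⱼ = F_τ⁻¹ ∘ ((j + ·) / k) ∘ F_σ`
average `σ` to `τ`, and uniform continuity of `F_τ⁻¹` makes their ranges small once `k` is
large. Such `k` with `n k ∈ D` exist since `D` is infinite and closed under `lcm`. The
block-diagonal map `f ↦ diag(f ∘ ξⱼ)` is trace-preserving by change of variables, and
injective because `τ` is faithful, which forces the ranges of the `ξⱼ` to cover `[0,1]`.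
-/

open MeasureTheory
open scoped ENNReal

noncomputable section

/-- The unit interval `[0,1]` as a type. -/
abbrev 𝕀 : Type := unitInterval

/-- A measure on `[0,1]` is *faithful* if it assigns positive measure to every
nonempty (relatively) open subset. -/
def Faithful (μ : Measure 𝕀) : Prop :=
  ∀ U : Set 𝕀, IsOpen U → U.Nonempty → 0 < μ U

/-- A measure on `[0,1]` is *diffuse* (atomless) if every singleton has measure zero. -/
def Diffuse (μ : Measure 𝕀) : Prop :=
  ∀ t : 𝕀, μ {t} = 0

open scoped Matrix.Norms.L2Operator ComplexOrder

/-- `n × n` complex matrices. -/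
abbrev Mat (n : ℕ) : Type := Matrix (Fin n) (Fin n) ℂ

/-- The C*-algebra `𝔸 n = C([0,1], Mₙ(ℂ))` of continuous matrix-valued functions. -/
abbrev 𝔸 (n : ℕ) : Type := C(𝕀, Mat n)

/-- The tracial state on `𝔸 n` induced by the measure `μ` on `[0,1]`:
`f ↦ ∫ tr(f t) dμ(t)`, where `tr` is the normalized trace on `Mₙ(ℂ)`. -/
def trInt (n : ℕ) (μ : Measure 𝕀) (f : 𝔸 n) : ℂ :=
  ∫ t, (f t).trace / (n : ℂ) ∂μ

/-- Block diagonal (with `k` blocks of size `n`) as a linear map, reindexed to `Fin m`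
where `m = n * k`. -/
def diagL (n k m : ℕ) (h : n * k = m) : (Fin k → Mat n) →ₗ[ℂ] Mat m where
  toFun g := (Matrix.blockDiagonal g).submatrix
      (fun a => finProdFinEquiv.symm (Fin.cast h.symm a))
      (fun a => finProdFinEquiv.symm (Fin.cast h.symm a))
  map_add' g₁ g₂ := by
    simp [Matrix.blockDiagonal_add, Matrix.submatrix_add]
  map_smul' c g := by
    simp [Matrix.blockDiagonal_smul, Matrix.submatrix_smul]

/-- `diag n k m h ξ f` is the element of `𝔸 m` whose value at `t` is the block-diagonal
matrix with diagonal blocks `f (ξ 0 t), …, f (ξ (k-1) t)`. -/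
def diag (n k m : ℕ) (h : n * k = m) (ξ : Fin k → C(𝕀, 𝕀)) (f : 𝔸 n) : 𝔸 m where
  toFun t := diagL n k m h (fun j => f (ξ j t))
  continuous_toFun := (diagL n k m h).continuous_of_finiteDimensional.comp
      (continuous_pi fun j => f.continuous.comp (ξ j).continuous)

open Set Filter ProbabilityTheory

lemma continuous_cdf_of_nullSingletonClass (ν : Measure ℝ) [IsProbabilityMeasure ν]
    [NullSingletonClass ν] : Continuous (cdf ν) := by
  refine continuous_iff_continuousAt.2 fun a => ?_
  have h := (cdf ν).measure_singleton a
  rw [measure_cdf, measure_singleton, eq_comm, ENNReal.ofReal_eq_zero, sub_nonpos] at h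
  rw [(monotone_cdf ν).continuousAt_iff_leftLim_eq_rightLim, (cdf ν).rightLim_eq]
  exact le_antisymm ((monotone_cdf ν).leftLim_le le_rfl) h

namespace unitInterval

instance isProbabilityMeasure_map_coe (μ : Measure 𝕀) [IsProbabilityMeasure μ] :
    IsProbabilityMeasure (μ.map ((↑) : 𝕀 → ℝ)) :=
  Measure.isProbabilityMeasure_map (by fun_prop)

lemma nullSingletonClass_map_coe {μ : Measure 𝕀} (hd : Diffuse μ) :
    NullSingletonClass (μ.map ((↑) : 𝕀 → ℝ)) := by
  have : NullSingletonClass μ := ⟨hd⟩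
  refine ⟨fun a => ?_⟩
  rw [Measure.map_apply (by fun_prop) (measurableSet_singleton a)]
  exact ((subsingleton_singleton.preimage Subtype.val_injective).finite).measure_zero μ

variable {μ : Measure 𝕀} [IsProbabilityMeasure μ]

variable (μ) in
def cdfSelfMap (t : 𝕀) : 𝕀 :=
  ⟨cdf (μ.map ((↑) : 𝕀 → ℝ)) t, cdf_nonneg _ _, cdf_le_one _ _⟩

lemma measure_Iic_eq_ofReal_cdfSelfMap (t : 𝕀) :
    μ (Iic t) = ENNReal.ofReal (cdfSelfMap μ t) := by
  rw [cdfSelfMap, ofReal_cdf, Measure.map_apply (by fun_prop) measurableSet_Iic,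
    preimage_subtype_val_Iic]

lemma continuous_cdfSelfMap (hd : Diffuse μ) : Continuous (cdfSelfMap μ) := by
  have := nullSingletonClass_map_coe hd
  exact ((continuous_cdf_of_nullSingletonClass _).comp continuous_subtype_val).subtype_mk _

lemma strictMono_cdfSelfMap (hf : Faithful μ) : StrictMono (cdfSelfMap μ) := by
  intro s t hst
  have hpos : 0 < μ (Ioc s t) :=
    (hf _ isOpen_Ioo (nonempty_Ioo.2 hst)).trans_le (measure_mono Ioo_subset_Ioc_self)
  have hlt : μ (Iic s) < μ (Iic t) := by
    rw [← Iic_union_Ioc_eq_Iic hst.le, measure_union (Iic_disjoint_Ioc le_rfl) measurableSet_Ioc]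
    exact ENNReal.lt_add_right (measure_ne_top _ _) hpos.ne'
  rw [measure_Iic_eq_ofReal_cdfSelfMap, measure_Iic_eq_ofReal_cdfSelfMap,
    ENNReal.ofReal_lt_ofReal_iff'] at hlt
  exact hlt.1

lemma cdfSelfMap_zero (hd : Diffuse μ) : cdfSelfMap μ 0 = 0 := by
  have h := measure_Iic_eq_ofReal_cdfSelfMap (μ := μ) 0
  rw [show Iic (0 : 𝕀) = {0} from Iic_bot, hd, eq_comm, ENNReal.ofReal_eq_zero] at h
  exact le_antisymm h (cdfSelfMap μ 0).2.1

lemma cdfSelfMap_one : cdfSelfMap μ 1 = 1 := by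
  have h := measure_Iic_eq_ofReal_cdfSelfMap (μ := μ) 1
  rw [show Iic (1 : 𝕀) = univ from Iic_top, measure_univ, eq_comm, ENNReal.ofReal_eq_one] at h
  exact Subtype.ext h

lemma surjective_cdfSelfMap (hd : Diffuse μ) : Function.Surjective (cdfSelfMap μ) := by
  intro y
  obtain ⟨t, ht⟩ := intermediate_value_univ 0 1 (continuous_cdfSelfMap hd)
    (show y ∈ Icc _ _ by rw [cdfSelfMap_zero hd, cdfSelfMap_one]; exact ⟨y.2.1, y.2.2⟩)
  exact ⟨t, ht⟩

variable (μ) in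
def cdfOrderIso (hf : Faithful μ) (hd : Diffuse μ) : 𝕀 ≃o 𝕀 :=
  StrictMono.orderIsoOfSurjective _ (strictMono_cdfSelfMap hf) (surjective_cdfSelfMap hd)

variable (μ) in
def cdfHomeomorph (hf : Faithful μ) (hd : Diffuse μ) : 𝕀 ≃ₜ 𝕀 :=
  (cdfOrderIso μ hf hd).toHomeomorph

lemma measurePreserving_cdfHomeomorph (hf : Faithful μ) (hd : Diffuse μ) :
    MeasurePreserving (cdfHomeomorph μ hf hd) μ volume := by
  refine ⟨(cdfHomeomorph μ hf hd).measurable, Measure.ext_of_Iic _ _ fun y => ?_⟩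
  let e := cdfOrderIso μ hf hd
  rw [Measure.map_apply (cdfHomeomorph μ hf hd).measurable measurableSet_Iic, volume_Iic]
  change μ (e ⁻¹' Iic y) = _
  rw [e.preimage_Iic, measure_Iic_eq_ofReal_cdfSelfMap]
  exact congrArg (fun z : 𝕀 => ENNReal.ofReal z) (e.apply_symm_apply y)

lemma measurePreserving_cdfHomeomorph_symm (hf : Faithful μ) (hd : Diffuse μ) :
    MeasurePreserving (cdfHomeomorph μ hf hd).symm volume μ :=
  (measurePreserving_cdfHomeomorph hf hd).symm (cdfHomeomorph μ hf hd).toMeasurableEquiv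

lemma volume_setOf_coe_le (c : ℝ) :
    volume {x : 𝕀 | (x : ℝ) ≤ c} = ENNReal.ofReal (min c 1) := by
  have hIcc : Icc (0 : ℝ) 1 ∩ Iic c = Icc 0 (min c 1) := by
    ext; simp only [mem_inter_iff, mem_Icc, mem_Iic, le_min_iff]; tauto
  rw [volume_apply, show {x : 𝕀 | (x : ℝ) ≤ c} = Subtype.val ⁻¹' Iic c from rfl,
    Subtype.image_preimage_coe, hIcc, Real.volume_Icc, sub_zero]

def pieceMap {k : ℕ} (j : Fin k) : C(𝕀, 𝕀) where
  toFun x := ⟨((j : ℕ) + (x : ℝ)) / k,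
    div_nonneg (add_nonneg (Nat.cast_nonneg _) x.2.1) k.cast_nonneg, by
    rw [div_le_one (by exact_mod_cast j.pos)]
    have : (j : ℝ) + 1 ≤ k := by exact_mod_cast j.is_lt
    linarith [x.2.2]⟩
  continuous_toFun := by fun_prop

lemma pieceMap_preimage_Iic {k : ℕ} (j : Fin k) (y : 𝕀) :
    pieceMap j ⁻¹' Iic y = {x : 𝕀 | (x : ℝ) ≤ k * y - j} := by
  ext x
  change ((j : ℕ) + (x : ℝ)) / k ≤ y ↔ (x : ℝ) ≤ k * y - j
  rw [div_le_iff₀ (by exact_mod_cast j.pos)]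
  constructor <;> intro h <;> linarith

lemma dist_pieceMap_le {k : ℕ} (j : Fin k) (x y : 𝕀) :
    dist (pieceMap j x) (pieceMap j y) ≤ 1 / k := by
  change dist (((j : ℕ) + (x : ℝ)) / k) (((j : ℕ) + (y : ℝ)) / k) ≤ 1 / k
  rw [Real.dist_eq, ← sub_div, abs_div, Nat.abs_cast]
  gcongr
  rw [abs_le]
  constructor <;> linarith [x.2.1, x.2.2, y.2.1, y.2.2]

-- `ofReal` truncates at `0`, so the `j`-th summand is the length of `[j, j + 1] ∩ [0, x]`.
lemma sum_range_ofReal_min_sub_one (k : ℕ) {x : ℝ} (h0 : 0 ≤ x) (hk : x ≤ k) :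
    ∑ j ∈ Finset.range k, ENNReal.ofReal (min (x - j) 1) = ENNReal.ofReal x := by
  induction k with
  | zero => simp [le_antisymm (by exact_mod_cast hk) h0]
  | succ k ih =>
    rw [Finset.sum_range_succ]
    rcases le_or_gt x k with hxk | hxk
    · have hlast : min (x - k) 1 ≤ 0 := (min_le_left _ _).trans (by linarith)
      rw [ih hxk, ENNReal.ofReal_of_nonpos hlast, add_zero]
    · have hone : ∀ j ∈ Finset.range k, ENNReal.ofReal (min (x - j) 1) = 1 := fun j hj => by
        have : (j : ℝ) + 1 ≤ k := by exact_mod_cast Finset.mem_range.1 hj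
        rw [min_eq_right (by linarith), ENNReal.ofReal_one]
      push_cast at hk
      rw [Finset.sum_congr rfl hone, Finset.sum_const, Finset.card_range, nsmul_one,
        min_eq_left (by linarith), ← ENNReal.ofReal_natCast,
        ← ENNReal.ofReal_add (by positivity) (by linarith), add_sub_cancel]

lemma sum_map_pieceMap_volume (k : ℕ) :
    ∑ j : Fin k, volume.map (pieceMap j) = (k : ℝ≥0∞) • (volume : Measure 𝕀) := by
  refine Measure.ext_of_Iic _ _ fun y => ?_
  have hy : (0 : ℝ) ≤ k * y := mul_nonneg k.cast_nonneg y.2.1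
  have hyk : (k : ℝ) * y ≤ k := mul_le_of_le_one_right k.cast_nonneg y.2.2
  simp_rw [Measure.finsetSum_apply, Measure.map_apply (pieceMap _).measurable measurableSet_Iic,
    pieceMap_preimage_Iic, volume_setOf_coe_le, Measure.smul_apply, volume_Iic, smul_eq_mul]
  rw [Fin.sum_univ_eq_sum_range (fun j => ENNReal.ofReal (min (k * y - j) 1)),
    sum_range_ofReal_min_sub_one k hy hyk, ENNReal.ofReal_mul k.cast_nonneg,
    ENNReal.ofReal_natCast]

def cutUp (G F : C(𝕀, 𝕀)) {k : ℕ} (j : Fin k) : C(𝕀, 𝕀) :=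
  G.comp ((pieceMap j).comp F)

lemma sum_map_cutUp {μ ν : Measure 𝕀} {G F : C(𝕀, 𝕀)} (hG : MeasurePreserving G volume ν)
    (hF : MeasurePreserving F μ volume) (k : ℕ) :
    ∑ j : Fin k, μ.map (cutUp G F j) = (k : ℝ≥0∞) • ν := by
  calc ∑ j : Fin k, μ.map (cutUp G F j) = ∑ j : Fin k, (volume.map (pieceMap j)).map G := by
        refine Finset.sum_congr rfl fun j _ => ?_
        rw [← hF.map_eq, Measure.map_map (by fun_prop) (by fun_prop),
          Measure.map_map (by fun_prop) (by fun_prop)]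
        rfl
    _ = (∑ j : Fin k, volume.map (pieceMap j)).map G := by
        simp_rw [← Measure.mapₗ_apply_of_measurable G.measurable, map_sum]
    _ = (k : ℝ≥0∞) • ν := by
        rw [sum_map_pieceMap_volume, Measure.map_smul, hG.map_eq]

lemma eventually_diam_range_cutUp_lt (G F : C(𝕀, 𝕀)) {ε : ℝ} (hε : 0 < ε) :
    ∀ᶠ k in atTop, ∀ j : Fin k, Metric.diam (range (cutUp G F j)) < ε := by
  obtain ⟨δ, hδ, hGδ⟩ := Metric.uniformContinuous_iff.1
    (CompactSpace.uniformContinuous_of_continuous G.continuous) (ε / 2) (half_pos hε)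
  filter_upwards [tendsto_one_div_atTop_nhds_zero_nat.eventually (gt_mem_nhds hδ)] with k hk j
  refine lt_of_le_of_lt (Metric.diam_le_of_forall_dist_le (half_pos hε).le ?_) (half_lt_self hε)
  rintro _ ⟨x, rfl⟩ _ ⟨y, rfl⟩
  exact (hGδ ((dist_pieceMap_le j _ _).trans_lt hk)).le

end unitInterval

lemma frequently_mul_mem {D : Set ℕ} (hDinf : D.Infinite) (hDpos : ∀ d ∈ D, 0 < d)
    (hDlcm : ∀ a ∈ D, ∀ b ∈ D, Nat.lcm a b ∈ D) {n : ℕ} (hnD : n ∈ D) :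
    ∃ᶠ k in atTop, n * k ∈ D := by
  refine frequently_atTop'.2 fun M => ?_
  obtain ⟨d, hdD, hd⟩ := hDinf.exists_gt (n * M)
  obtain ⟨k, hk⟩ := Nat.dvd_lcm_left n d
  have hl := hDlcm n hnD d hdD
  have hdl : d ≤ n * k := hk ▸ Nat.le_of_dvd (hDpos _ hl) (Nat.dvd_lcm_right n d)
  exact ⟨k, Nat.lt_of_mul_lt_mul_left (hd.trans_le hdl), hk ▸ hl⟩

lemma iUnion_range_eq_univ_of_faithful {σ τ : Measure 𝕀} (hτ : Faithful τ) {k : ℕ}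
    {ξ : Fin k → C(𝕀, 𝕀)} (h : (k : ℝ≥0∞)⁻¹ • ∑ j, σ.map (ξ j) = τ) :
    ⋃ j, range (ξ j) = univ := by
  set U := (⋃ j, range (ξ j))ᶜ
  have hU : IsOpen U :=
    (isCompact_iUnion fun j => isCompact_range (ξ j).continuous).isClosed.isOpen_compl
  have hτU : τ U = 0 := by
    rw [← h, Measure.smul_apply, Measure.finsetSum_apply, Finset.sum_eq_zero fun j _ => ?_,
      smul_zero]
    have hpre : ξ j ⁻¹' U = ∅ := by
      rw [preimage_compl, compl_empty_iff, eq_univ_iff_forall]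
      exact fun t => mem_iUnion.2 ⟨j, t, rfl⟩
    rw [Measure.map_apply (ξ j).measurable hU.measurableSet, hpre, measure_empty]
  by_contra hne
  exact (hτ U hU (nonempty_compl.2 hne)).ne' hτU

lemma integral_inv_smul_sum_map {E : Type*} [NormedAddCommGroup E] [NormedSpace ℝ E]
    {μ : Measure 𝕀} [IsFiniteMeasure μ] {k : ℕ} (ξ : Fin k → C(𝕀, 𝕀)) {h : 𝕀 → E}
    (hh : Continuous h) :
    ∫ x, h x ∂((k : ℝ≥0∞)⁻¹ • ∑ j, μ.map (ξ j)) = (k : ℝ)⁻¹ • ∑ j, ∫ x, h (ξ j x) ∂μ := by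
  have hint : ∀ j, Integrable h (μ.map (ξ j)) := fun j =>
    hh.integrable_of_hasCompactSupport (.of_compactSpace h)
  rw [integral_smul_measure, integral_finsetSum_measure fun j _ => hint j, ENNReal.toReal_inv,
    ENNReal.toReal_natCast]
  congr 1
  exact Finset.sum_congr rfl fun j _ =>
    integral_map (ξ j).measurable.aemeasurable hh.aestronglyMeasurable

lemma diagL_eq_reindex_blockDiagonal (n k : ℕ) (g : Fin k → Mat n) :
    diagL n k (n * k) rfl g =
      Matrix.reindexAlgEquiv ℂ ℂ finProdFinEquiv (Matrix.blockDiagonal g) :=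
  rfl

def blockDiagStarAlgHom (n k : ℕ) : (Fin k → Mat n) →⋆ₐ[ℂ] Mat (n * k) where
  toAlgHom := AlgHom.ofLinearMap (diagL n k (n * k) rfl)
    (by rw [diagL_eq_reindex_blockDiagonal, Matrix.blockDiagonal_one, map_one])
    (fun g h => by
      simp only [diagL_eq_reindex_blockDiagonal, ← map_mul, ← Matrix.blockDiagonal_mul]
      rfl)
  map_star' g := by
    change diagL n k (n * k) rfl (star g) = star (diagL n k (n * k) rfl g)
    simp only [diagL_eq_reindex_blockDiagonal, Matrix.coe_reindexAlgEquiv, Matrix.reindex_apply,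
      Matrix.star_eq_conjTranspose, Matrix.conjTranspose_submatrix,
      Matrix.blockDiagonal_conjTranspose]
    rfl

lemma trace_diagL (n k : ℕ) (g : Fin k → Mat n) :
    (diagL n k (n * k) rfl g).trace = ∑ j, (g j).trace := by
  rw [diagL_eq_reindex_blockDiagonal, Matrix.coe_reindexAlgEquiv, Matrix.reindex_apply,
    ← Matrix.trace_blockDiagonal]
  exact Equiv.sum_comp finProdFinEquiv.symm fun i => Matrix.blockDiagonal g i i

lemma diagL_apply_finProdFinEquiv (n k : ℕ) (g : Fin k → Mat n) (a b : Fin n) (j : Fin k) :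
    diagL n k (n * k) rfl g (finProdFinEquiv (a, j)) (finProdFinEquiv (b, j)) = g j a b := by
  simp [diagL_eq_reindex_blockDiagonal, Matrix.blockDiagonal_apply_eq]

def diagStarAlgHom (n k : ℕ) (ξ : Fin k → C(𝕀, 𝕀)) : 𝔸 n →⋆ₐ[ℂ] 𝔸 (n * k) where
  toFun := diag n k (n * k) rfl ξ
  map_one' := ContinuousMap.ext fun _ => map_one (blockDiagStarAlgHom n k)
  map_mul' _ _ := ContinuousMap.ext fun _ => map_mul (blockDiagStarAlgHom n k) _ _
  map_zero' := ContinuousMap.ext fun _ => map_zero (blockDiagStarAlgHom n k)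
  map_add' _ _ := ContinuousMap.ext fun _ => map_add (blockDiagStarAlgHom n k) _ _
  commutes' c := ContinuousMap.ext fun _ => AlgHomClass.commutes (blockDiagStarAlgHom n k) c
  map_star' _ := ContinuousMap.ext fun _ => map_star (blockDiagStarAlgHom n k) _

lemma diagStarAlgHom_injective {n k : ℕ} {ξ : Fin k → C(𝕀, 𝕀)}
    (hξ : ⋃ j, range (ξ j) = univ) : Function.Injective (diagStarAlgHom n k ξ) := by
  intro f g hfg
  ext s a b
  obtain ⟨j, t, rfl⟩ := mem_iUnion.1 (hξ ▸ mem_univ s)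
  have := congr_fun (congr_fun (DFunLike.congr_fun hfg t) (finProdFinEquiv (a, j)))
    (finProdFinEquiv (b, j))
  change diagL n k (n * k) rfl _ _ _ = diagL n k (n * k) rfl _ _ _ at this
  rwa [diagL_apply_finProdFinEquiv, diagL_apply_finProdFinEquiv] at this

lemma trInt_diag {μ ν : Measure 𝕀} [IsFiniteMeasure μ] {n k : ℕ} {ξ : Fin k → C(𝕀, 𝕀)}
    (h : (k : ℝ≥0∞)⁻¹ • ∑ j, μ.map (ξ j) = ν) (f : 𝔸 n) :
    trInt (n * k) μ (diag n k (n * k) rfl ξ f) = trInt n ν f := by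
  have hint : ∀ j, Integrable (fun t => (f (ξ j t)).trace / (n : ℂ)) μ := fun j =>
    (by fun_prop : Continuous _).integrable_of_hasCompactSupport (.of_compactSpace _)
  rw [trInt, trInt, ← h, integral_inv_smul_sum_map ξ (by fun_prop),
    ← integral_finsetSum _ fun j _ => hint j, ← integral_smul]
  congr 1 with t
  change (diagL n k (n * k) rfl fun j => f (ξ j t)).trace / ((n * k : ℕ) : ℂ) = _
  rw [trace_diagL, Finset.sum_div, Finset.smul_sum]
  refine Finset.sum_congr rfl fun j _ => ?_
  rw [Complex.real_smul]
  push_cast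
  ring

theorem statement6_general (τ σ : Measure 𝕀) [IsProbabilityMeasure τ] [IsProbabilityMeasure σ]
    (hτf : Faithful τ) (hτd : Diffuse τ)
    (hσf : Faithful σ) (hσd : Diffuse σ) (n : ℕ) (ε : ℝ) (hε : 0 < ε)
    (D : Set ℕ) (hDinf : D.Infinite) (hDpos : ∀ d ∈ D, 0 < d)
    (hDlcm : ∀ a ∈ D, ∀ b ∈ D, Nat.lcm a b ∈ D) (hnD : n ∈ D) :
    ∃ k : ℕ, 1 ≤ k ∧ n * k ∈ D ∧ ∃ ξ : Fin k → C(𝕀, 𝕀),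
      (∀ j : Fin k, Metric.diam (Set.range (ξ j)) < ε) ∧
      ((k : ℝ≥0∞)⁻¹ • ∑ j : Fin k, Measure.map (ξ j) σ = τ) ∧
      ∃ Φ : 𝔸 n →⋆ₐ[ℂ] 𝔸 (n * k),
        (∀ f : 𝔸 n, Φ f = diag n k (n * k) rfl ξ f) ∧
        Function.Injective Φ ∧
        ∀ f : 𝔸 n, trInt (n * k) σ (Φ f) = trInt n τ f := by
  let G : C(𝕀, 𝕀) := (unitInterval.cdfHomeomorph τ hτf hτd).symm
  let F : C(𝕀, 𝕀) := unitInterval.cdfHomeomorph σ hσf hσd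
  obtain ⟨k, hnk, hk, hdiam⟩ := ((frequently_mul_mem hDinf hDpos hDlcm hnD).and_eventually
    ((eventually_ge_atTop 1).and (unitInterval.eventually_diam_range_cutUp_lt G F hε))).exists
  have hmeas : (k : ℝ≥0∞)⁻¹ • ∑ j : Fin k, σ.map (unitInterval.cutUp G F j) = τ := by
    rw [unitInterval.sum_map_cutUp (unitInterval.measurePreserving_cdfHomeomorph_symm hτf hτd)
      (unitInterval.measurePreserving_cdfHomeomorph hσf hσd) k, smul_smul,
      ENNReal.inv_mul_cancel (Nat.cast_ne_zero.2 (by omega)) (ENNReal.natCast_ne_top k),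
      one_smul]
  exact ⟨k, hk, hnk, unitInterval.cutUp G F, hdiam, hmeas, diagStarAlgHom n k _, fun _ => rfl,
    diagStarAlgHom_injective (iUnion_range_eq_univ_of_faithful hτf hmeas), trInt_diag hmeas⟩

/-- The cutting-up lemma: for faithful diffuse measures τ, σ and a
supernatural-number divisor set `D` containing `n`, there is a diagonal morphism
`⟨𝔸 n, τ⟩ → ⟨𝔸 (n*k), σ⟩` whose associated maps have images of diameter less than ε. -/
theorem statement6 (τ σ : Measure 𝕀) [IsProbabilityMeasure τ] [IsProbabilityMeasure σ]
    [τ.Regular] [σ.Regular] (hτf : Faithful τ) (hτd : Diffuse τ)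
    (hσf : Faithful σ) (hσd : Diffuse σ) (n : ℕ) (hn : 1 ≤ n) (ε : ℝ) (hε : 0 < ε)
    (D : Set ℕ) (hDinf : D.Infinite) (hDpos : ∀ d ∈ D, 0 < d)
    (hDdvd : ∀ d ∈ D, ∀ c : ℕ, c ∣ d → c ∈ D)
    (hDlcm : ∀ a ∈ D, ∀ b ∈ D, Nat.lcm a b ∈ D) (hnD : n ∈ D) :
    ∃ k : ℕ, 1 ≤ k ∧ n * k ∈ D ∧ ∃ ξ : Fin k → C(𝕀, 𝕀),
      (∀ j : Fin k, Metric.diam (Set.range (ξ j)) < ε) ∧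
      ((k : ℝ≥0∞)⁻¹ • ∑ j : Fin k, Measure.map (ξ j) σ = τ) ∧
      ∃ Φ : 𝔸 n →⋆ₐ[ℂ] 𝔸 (n * k),
        (∀ f : 𝔸 n, Φ f = diag n k (n * k) rfl ξ f) ∧
        Function.Injective Φ ∧
        ∀ f : 𝔸 n, trInt (n * k) σ (Φ f) = trInt n τ f :=
  statement6_general τ σ hτf hτd hσf hσd n ε hε D hDinf hDpos hDlcm hnD
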